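/- arXiv:2202.09974 — 8 statements merged into one kernel-verified Lean document; each statement's English description precedes it below -/
import Mathlib

section
/- Let k be a real number and let x, y be complex numbers with x ≠ 0. Set M(x,y) = Q_k(x-1, y) and M*(x,y) = x^4 y^2 Q_k(1/x - 1, 1/y), where Q_k(x,y) = y^2 + (x^4 + k x^3 + 2k x^2 + k x + 1) y + x^4. If M(x,y) = 0 and M*(x,y) = 0, then ((k+5)x^6 + (-k-35)x^5 + (-7k+100)x^4 + (15k-145)x^3 + (-7k+100)x^2 + (-k-35)x + (k+5)) · (x-1)^2 · (x^2 - x + 1)^2 · x^2 · k = 0. -/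
open Complex

/-- If `M(x,y) = Q_k(x-1, y)` and `M*(x,y) = x⁴ y² Q_k(1/x - 1, 1/y)` both vanish, then the
resultant factorization
`((k+5)x⁶ + (-k-35)x⁵ + (-7k+100)x⁴ + (15k-145)x³ + (-7k+100)x² + (-k-35)x + (k+5))
  · (x-1)² (x²-x+1)² x² k = 0` holds. -/
theorem resultant_vanishes_of_M_Mstar_eq_zero (k : ℝ) (x y : ℂ) (hx : x ≠ 0)
    (hM : y ^ 2 +
      ((x - 1) ^ 4 + (k : ℂ) * (x - 1) ^ 3 + 2 * (k : ℂ) * (x - 1) ^ 2 +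
        (k : ℂ) * (x - 1) + 1) * y + (x - 1) ^ 4 = 0)
    (hMstar : x ^ 4 * y ^ 2 *
      ((1 / y) ^ 2 +
        ((1 / x - 1) ^ 4 + (k : ℂ) * (1 / x - 1) ^ 3 + 2 * (k : ℂ) * (1 / x - 1) ^ 2 +
          (k : ℂ) * (1 / x - 1) + 1) * (1 / y) + (1 / x - 1) ^ 4) = 0) :
    (((k : ℂ) + 5) * x ^ 6 + (-(k : ℂ) - 35) * x ^ 5 + (-7 * (k : ℂ) + 100) * x ^ 4 +
        (15 * (k : ℂ) - 145) * x ^ 3 + (-7 * (k : ℂ) + 100) * x ^ 2 +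
        (-(k : ℂ) - 35) * x + ((k : ℂ) + 5)) *
      (x - 1) ^ 2 * (x ^ 2 - x + 1) ^ 2 * x ^ 2 * (k : ℂ) = 0 := by
  by_cases hy : y = 0
  · subst hy
    have h4 : (x - 1) ^ 4 = 0 := by linear_combination hM
    have hx1 : x = 1 := by
      have h := pow_eq_zero_iff (n := 4) (by norm_num) |>.mp h4
      exact sub_eq_zero.mp h
    subst hx1
    ring
  · have hix : x * x⁻¹ = 1 := mul_inv_cancel₀ hx
    have hiy : y * y⁻¹ = 1 := mul_inv_cancel₀ hy
    have h2 : (1 - x) ^ 4 * y ^ 2 +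
        (2 * x ^ 4 - 4 * x ^ 3 - (k : ℂ) * x ^ 2 + 6 * x ^ 2 + (k : ℂ) * x - 4 * x + 1) * y
        + x ^ 4 = 0 := by
      linear_combination hMstar - (x^3*x⁻¹^3*y^2*y⁻¹ + x^3*x⁻¹^3*y^2 + x^3*x⁻¹^2*y^2*y⁻¹*(k:ℂ) + (-4)*x^3*x⁻¹^2*y^2*y⁻¹ + (-4)*x^3*x⁻¹^2*y^2 + (-1)*x^3*x⁻¹*y^2*y⁻¹*(k:ℂ) + 6*x^3*x⁻¹*y^2*y⁻¹ + 6*x^3*x⁻¹*y^2 + (-4)*x^3*y^2*y⁻¹ + (-4)*x^3*y^2 + x^2*x⁻¹^2*y^2*y⁻¹ + x^2*x⁻¹^2*y^2 + x^2*x⁻¹*y^2*y⁻¹*(k:ℂ) + (-4)*x^2*x⁻¹*y^2*y⁻¹ + (-4)*x^2*x⁻¹*y^2 + (-1)*x^2*y^2*y⁻¹*(k:ℂ) + 6*x^2*y^2*y⁻¹ + 6*x^2*y^2 + x*x⁻¹*y^2*y⁻¹ + x*x⁻¹*y^2 + x*y^2*y⁻¹*(k:ℂ) + (-4)*x*y^2*y⁻¹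 + (-4)*x*y^2 + y^2*y⁻¹ + y^2) * hix - (x^4*y*y⁻¹ + 2*x^4*y + x^4 + (-4)*x^3*y + (-1)*x^2*y*(k:ℂ) + 6*x^2*y + x*y*(k:ℂ) + (-4)*x*y + y) * hiy
    have key : (((k : ℂ) + 5) * x ^ 6 + (-(k : ℂ) - 35) * x ^ 5 + (-7 * (k : ℂ) + 100) * x ^ 4 +
        (15 * (k : ℂ) - 145) * x ^ 3 + (-7 * (k : ℂ) + 100) * x ^ 2 +
        (-(k : ℂ) - 35) * x + ((k : ℂ) + 5)) *
      (x - 1) ^ 2 * (x ^ 2 - x + 1) ^ 2 * x ^ 2 * (k : ℂ) * y = 0 := by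
      linear_combination ((x^8 + x^7*(k:ℂ) + (-8)*x^7 + (-5)*x^6*(k:ℂ) + 28*x^6 + 10*x^5*(k:ℂ) + (-56)*x^5 + (-10)*x^4*(k:ℂ) + 69*x^4 + 5*x^3*(k:ℂ) + (-56)*x^3 + 28*x^2 + (-1)*x*(k:ℂ) + (-8)*x + 1) * x ^ 4 - ((-1)*x^8 + 8*x^7 + (-28)*x^6 + 56*x^5 + (-69)*x^4 + 56*x^3 + (-28)*x^2 + 8*x + (-1)) * y * (1 - x) ^ 4) * hM
        + (((-1)*x^8 + 8*x^7 + (-28)*x^6 + 56*x^5 + (-69)*x^4 + 56*x^3 + (-28)*x^2 + 8*x + (-1)) * y - (x^8 + x^7*(k:ℂ) + (-8)*x^7 + (-5)*x^6*(k:ℂ) + 28*x^6 + 10*x^5*(k:ℂ) + (-56)*x^5 + (-10)*x^4*(k:ℂ) + 69*x^4 + 5*x^3*(k:ℂ) + (-56)*x^3 + 28*x^2 + (-1)*x*(k:ℂ) + (-8)*x + 1) * (x - 1) ^ 4) * h2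
    exact (mul_eq_zero.mp key).resolve_right hy
end

section
/- Let k be a real number with k ≤ -1 or k > 17, and let x be a complex number with |x| = 1. Then (k+5)x^6 + (-k-35)x^5 + (-7k+100)x^4 + (15k-145)x^3 + (-7k+100)x^2 + (-k-35)x + (k+5) ≠ 0. -/
open Complex

/-! The sextic is palindromic, so on the unit circle it equals `x³ μ(k, s)` with
`s = x + x⁻¹ = 2 Re x ∈ [-2, 2]` and `μ` a cubic in `s`, linear in `k`. The coefficient of `k`
is `1 + (2 - s)(8 - s - s²) ≥ 1` and the constant term is `-5 + 5(s - 2)(s² - 5s + 7) ≤ -5`,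
so `μ ≤ -6` for `k ≤ -1`; for `k > 17`, `μ > 17 · (coefficient of k) + (constant term)
= (s + 2)(22s² - 96s + 107) ≥ 0`. -/

section

variable {R : Type*} [CommRing R]

def sextic (k x : R) : R :=
  (k + 5) * x ^ 6 + (-k - 35) * x ^ 5 + (-7 * k + 100) * x ^ 4 + (15 * k - 145) * x ^ 3 +
    (-7 * k + 100) * x ^ 2 + (-k - 35) * x + (k + 5)

/-- The paper's `μ(k, s)`. -/
def sexticReduced (k s : R) : R :=
  (s ^ 3 - s ^ 2 - 10 * s + 17) * k + 5 * s ^ 3 - 35 * s ^ 2 + 85 * s - 75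

end

theorem sextic_eq_pow_three_mul_sexticReduced {K : Type*} [Field K] (k : K) {x : K}
    (hx : x ≠ 0) : sextic k x = x ^ 3 * sexticReduced k (x + x⁻¹) := by
  unfold sextic sexticReduced
  field_simp
  ring

@[simp, norm_cast]
theorem Complex.ofReal_sexticReduced (k s : ℝ) :
    ((sexticReduced k s : ℝ) : ℂ) = sexticReduced (k : ℂ) (s : ℂ) := by
  simp [sexticReduced]

theorem Complex.add_inv_eq_two_re_of_norm_eq_one {x : ℂ} (hx : ‖x‖ = 1) :
    x + x⁻¹ = ((2 * x.re : ℝ) : ℂ) := by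
  rw [inv_eq_conj hx, add_conj]

theorem Complex.two_re_mem_Icc_of_norm_eq_one {x : ℂ} (hx : ‖x‖ = 1) :
    2 * x.re ∈ Set.Icc (-2 : ℝ) 2 := by
  have := abs_le.mp (hx ▸ abs_re_le_norm x)
  constructor <;> linarith [this.1, this.2]

section

variable {k s : ℝ}

theorem one_le_sexticReduced_coeff (hs : s ∈ Set.Icc (-2 : ℝ) 2) :
    1 ≤ s ^ 3 - s ^ 2 - 10 * s + 17 := by
  obtain ⟨hs₁, hs₂⟩ := hs
  have : 0 ≤ (2 - s) * (8 - s - s ^ 2) := mul_nonneg (by linarith) (by nlinarith)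
  nlinarith

theorem sexticReduced_neg (hk : k ≤ -1) (hs : s ∈ Set.Icc (-2 : ℝ) 2) :
    sexticReduced k s < 0 := by
  have hcoeff := one_le_sexticReduced_coeff hs
  have hconst : 5 * s ^ 3 - 35 * s ^ 2 + 85 * s - 75 ≤ -5 := by
    have : (s - 2) * (s ^ 2 - 5 * s + 7) ≤ 0 :=
      mul_nonpos_of_nonpos_of_nonneg (by linarith [hs.2]) (by nlinarith [sq_nonneg (2 * s - 5)])
    nlinarith
  have : (s ^ 3 - s ^ 2 - 10 * s + 17) * k ≤ -1 := by nlinarith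
  unfold sexticReduced
  linarith

theorem sexticReduced_pos (hk : 17 < k) (hs : s ∈ Set.Icc (-2 : ℝ) 2) :
    0 < sexticReduced k s := by
  have hcoeff := one_le_sexticReduced_coeff hs
  have hbound : 0 ≤ (s + 2) * (22 * s ^ 2 - 96 * s + 107) :=
    mul_nonneg (by linarith [hs.1]) (by nlinarith [sq_nonneg (11 * s - 24)])
  have : (s ^ 3 - s ^ 2 - 10 * s + 17) * 17 < (s ^ 3 - s ^ 2 - 10 * s + 17) * k := by
    nlinarith
  unfold sexticReduced
  nlinarith

theorem sexticReduced_ne_zero (hk : k ≤ -1 ∨ 17 < k) (hs : s ∈ Set.Icc (-2 : ℝ) 2) :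
    sexticReduced k s ≠ 0 :=
  hk.elim (fun hk ↦ (sexticReduced_neg hk hs).ne) (fun hk ↦ (sexticReduced_pos hk hs).ne')

end

/-- For `k ≤ -1` or `k > 17`, the sextic
`(k+5)x⁶ + (-k-35)x⁵ + (-7k+100)x⁴ + (15k-145)x³ + (-7k+100)x² + (-k-35)x + (k+5)`
has no roots on the unit circle. -/
theorem sextic_ne_zero_on_circle (k : ℝ) (hk : k ≤ -1 ∨ 17 < k)
    (x : ℂ) (hx : ‖x‖ = 1) :
    ((k : ℂ) + 5) * x ^ 6 + (-(k : ℂ) - 35) * x ^ 5 + (-7 * (k : ℂ) + 100) * x ^ 4 +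
      (15 * (k : ℂ) - 145) * x ^ 3 + (-7 * (k : ℂ) + 100) * x ^ 2 +
      (-(k : ℂ) - 35) * x + ((k : ℂ) + 5) ≠ 0 := by
  have hx₀ : x ≠ 0 := norm_ne_zero_iff.mp (hx ▸ one_ne_zero)
  change sextic (k : ℂ) x ≠ 0
  rw [sextic_eq_pow_three_mul_sexticReduced _ hx₀, add_inv_eq_two_re_of_norm_eq_one hx,
    ← ofReal_sexticReduced]
  exact mul_ne_zero (pow_ne_zero 3 hx₀)
    (ofReal_ne_zero.mpr (sexticReduced_ne_zero hk (two_re_mem_Icc_of_norm_eq_one hx)))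
end

section
/- Let k be a rational number such that the Weierstrass curve U_k : Y^2 + (k-2)XY + kY = X^3 (with coefficients a₁ = k-2, a₂ = 0, a₃ = k, a₄ = 0, a₆ = 0) is nonsingular, i.e., has nonzero discriminant. Then the point P = (k, k) lies on U_k, and in the group of points of U_k one has 6 • P = O (P is a torsion point of order dividing 6), while P ≠ O. -/
/-!
The tangent to `U_k` at `P = (k, k)` has slope `2` and meets the curve again at `(0, -k) = -(0, 0)`,
so `2P = T := (0, 0)`. The tangent at `T` is the line `Y = 0`, which meets `U_k` only where `X³ = 0`:
`T` is a flex, hence `3T = 0` and `6P = 3T = 0`. Nonsingularity of `U_k`, i.e.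
`Δ = k³(k + 1)²(k - 8) ≠ 0`, keeps `P` and `T` away from the `2`-torsion.
-/

open WeierstrassCurve WeierstrassCurve.Affine

namespace WeierstrassCurve.Affine.Point

variable {F : Type*} [Field F] [DecidableEq F] {W : Affine F}

lemma some_add_some_eq {x₁ x₂ x₃ y₁ y₂ y₃ : F} {h₁ : W.Nonsingular x₁ y₁}
    {h₂ : W.Nonsingular x₂ y₂} (h₃ : W.Nonsingular x₃ y₃)
    (hxy : ¬(x₁ = x₂ ∧ y₁ = W.negY x₂ y₂))
    (hx : W.addX x₁ x₂ (W.slope x₁ x₂ y₁ y₂) = x₃)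
    (hy : W.addY x₁ x₂ y₁ (W.slope x₁ x₂ y₁ y₂) = y₃) :
    some _ _ h₁ + some _ _ h₂ = some _ _ h₃ := by
  rw [add_some hxy, some.injEq]
  exact ⟨hx, hy⟩

end WeierstrassCurve.Affine.Point

section Uk

variable {F : Type*} [Field F]

def ukCurve (k : F) : WeierstrassCurve.Affine F :=
  { a₁ := k - 2, a₂ := 0, a₃ := k, a₄ := 0, a₆ := 0 }

lemma ukCurve_Δ (k : F) : (ukCurve k).Δ = k ^ 3 * (k + 1) ^ 2 * (k - 8) := by
  simp only [ukCurve, Δ, b₂, b₄, b₆, b₈]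
  ring

lemma ukCurve_equation_self (k : F) : (ukCurve k).Equation k k := by
  rw [equation_iff]
  simp only [ukCurve]
  ring

lemma ukCurve_negY (k x y : F) : (ukCurve k).negY x y = -y - (k - 2) * x - k := rfl

variable [DecidableEq F]

lemma ukCurve_add_self_eq_zero_zero {k : F} (hk : k ≠ 0) (hk₁ : k + 1 ≠ 0)
    (hP : (ukCurve k).Nonsingular k k) (hT : (ukCurve k).Nonsingular 0 0) :
    Point.some _ _ hP + Point.some _ _ hP = Point.some _ _ hT := by
  have hy : k ≠ (ukCurve k).negY k k := by
    rw [ukCurve_negY]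
    intro h
    exact mul_ne_zero hk hk₁ (by linear_combination h)
  have hslope : (ukCurve k).slope k k k k = 2 := by
    rw [slope_of_Y_ne rfl hy, div_eq_iff (sub_ne_zero.mpr hy), ukCurve_negY]
    simp only [ukCurve]
    ring
  refine Point.some_add_some_eq hT (fun h => hy h.2) ?_ ?_ <;>
    simp only [addY, negAddY, addX, hslope, ukCurve_negY] <;> simp only [ukCurve] <;> ring

lemma ukCurve_three_smul_zero_zero {k : F} (hk : k ≠ 0) (hT : (ukCurve k).Nonsingular 0 0) :
    3 • Point.some _ _ hT = 0 := by
  have hy : (0 : F) ≠ (ukCurve k).negY 0 0 := by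
    rw [ukCurve_negY]
    simpa using hk
  have hslope : (ukCurve k).slope 0 0 0 0 = 0 := by
    rw [slope_of_Y_ne rfl hy]
    simp [ukCurve]
  have hdouble : Point.some _ _ hT + Point.some _ _ hT = -Point.some _ _ hT := by
    refine Point.some_add_some_eq _ (fun h => hy h.2) ?_ ?_ <;>
      simp only [addY, negAddY, addX, hslope, ukCurve_negY] <;> simp [ukCurve]
  rw [succ_nsmul, two_nsmul, hdouble, neg_add_cancel]

end Uk

/-- On the nonsingular Weierstrass curve `U_k : Y² + (k-2)XY + kY = X³` over `ℚ`, the point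
`P = (k, k)` lies on the curve and is a nonzero torsion point with `6 • P = 0`. -/
theorem P_is_six_torsion_on_Uk (k : ℚ)
    (U : WeierstrassCurve.Affine ℚ)
    (hU : U = { a₁ := k - 2, a₂ := 0, a₃ := k, a₄ := 0, a₆ := 0 })
    (hΔ : U.Δ ≠ 0) :
    ∃ h : U.Nonsingular k k,
      6 • (WeierstrassCurve.Affine.Point.some _ _ h) = (0 : U.Point) ∧
        WeierstrassCurve.Affine.Point.some _ _ h ≠ (0 : U.Point) := by
  obtain rfl : U = ukCurve k := hU
  have hΔ' := ukCurve_Δ k ▸ hΔ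
  have hk : k ≠ 0 := fun h => hΔ' (by simp [h])
  have hk₁ : k + 1 ≠ 0 := fun h => hΔ' (by simp [h])
  have hP := (equation_iff_nonsingular_of_Δ_ne_zero hΔ).mp (ukCurve_equation_self k)
  have hT : (ukCurve k).Nonsingular 0 0 :=
    (equation_iff_nonsingular_of_Δ_ne_zero hΔ).mp (by simp [equation_iff, ukCurve])
  refine ⟨hP, ?_, Point.some_ne_zero hP⟩
  calc 6 • Point.some _ _ hP = 3 • (Point.some _ _ hP + Point.some _ _ hP) := by
        rw [← two_nsmul, ← mul_nsmul']
    _ = 0 := by rw [ukCurve_add_self_eq_zero_zero hk hk₁ hP hT, ukCurve_three_smul_zero_zero hk hT]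
end

section
/- Let k be a rational number such that the Weierstrass curve E_k : Y^2 = X^3 + (k^2 - 5k + 8)X^2 + (-2k^2 + 5k + 4)(4-k)X + (k^2 + k)(4-k)^2 is nonsingular, i.e., has nonzero discriminant. Then the point S = (4-k, 16-4k) lies on E_k, and in the group of points of E_k one has 4 • S = O (S is a torsion point of order dividing 4), while S ≠ O. -/
open WeierstrassCurve

/-!
The tangent to `E_k` at `S = (4 - k, 16 - 4k)` has slope `4 - k` and meets `E_k` again at
`T = (-k, 0)`, so `2 • S = T`, a point on the `X`-axis and hence of order two; thus `4 • S = 0`.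
The discriminant of `E_k` is `2¹² k (k - 8) (k - 4)²`, so nonsingularity forces `2 ≠ 0` and
`k ≠ 4`, which is exactly what keeps `S` off the `X`-axis.
-/

namespace WeierstrassCurve.Affine.Point

variable {F : Type*} [Field F] [DecidableEq F] {W : Affine F}

lemma add_self_eq_some_of_Y_ne {x y x' y' : F} {h : W.Nonsingular x y} (h' : W.Nonsingular x' y')
    (hy : y ≠ W.negY x y) (hx' : W.addX x x (W.slope x x y y) = x')
    (hy' : W.addY x x y (W.slope x x y y) = y') :
    some _ _ h + some _ _ h = some _ _ h' := by
  subst hx' hy'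
  exact add_self_of_Y_ne hy

end WeierstrassCurve.Affine.Point

open WeierstrassCurve.Affine

/-- The Weierstrass model `E_k` of `x + 1/x + y + 1/y + (k - 4) = 0`. -/
def curveE {R : Type*} [CommRing R] (k : R) : WeierstrassCurve.Affine R :=
  { a₁ := 0, a₂ := k ^ 2 - 5 * k + 8,
    a₃ := 0, a₄ := (-2 * k ^ 2 + 5 * k + 4) * (4 - k),
    a₆ := (k ^ 2 + k) * (4 - k) ^ 2 }

section CommRing

variable {R : Type*} [CommRing R] (k : R)

lemma curveE_Δ : (curveE k).Δ = 2 ^ 12 * k * (k - 8) * (k - 4) ^ 2 := by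
  simp only [curveE, Δ, b₂, b₄, b₆, b₈]
  ring

lemma curveE_negY (x y : R) : (curveE k).negY x y = -y := by
  simp [negY, curveE]

lemma curveE_equation_S : (curveE k).Equation (4 - k) (16 - 4 * k) := by
  rw [equation_iff]
  simp only [curveE]
  ring

lemma curveE_equation_T : (curveE k).Equation (-k) 0 := by
  rw [equation_iff]
  simp only [curveE]
  ring

end CommRing

section Field

variable {F : Type*} [Field F] {k : F}

lemma curveE_nonsingular_S (hΔ : (curveE k).Δ ≠ 0) :
    (curveE k).Nonsingular (4 - k) (16 - 4 * k) :=
  (equation_iff_nonsingular_of_Δ_ne_zero hΔ).mp (curveE_equation_S k)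

lemma curveE_nonsingular_T (hΔ : (curveE k).Δ ≠ 0) : (curveE k).Nonsingular (-k) 0 :=
  (equation_iff_nonsingular_of_Δ_ne_zero hΔ).mp (curveE_equation_T k)

lemma curveE_Y_S_ne_negY (hΔ : (curveE k).Δ ≠ 0) :
    16 - 4 * k ≠ (curveE k).negY (4 - k) (16 - 4 * k) := by
  have hΔ' := curveE_Δ k ▸ hΔ
  simp only [mul_ne_zero_iff, pow_ne_zero_iff, ne_eq, OfNat.ofNat_ne_zero,
    not_false_eq_true] at hΔ'
  obtain ⟨⟨⟨h2, -⟩, -⟩, hk⟩ := hΔ'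
  rw [curveE_negY]
  intro h
  exact mul_ne_zero (pow_ne_zero 3 h2) hk (by linear_combination -h)

variable [DecidableEq F]

lemma curveE_slope_S (hΔ : (curveE k).Δ ≠ 0) :
    (curveE k).slope (4 - k) (4 - k) (16 - 4 * k) (16 - 4 * k) = 4 - k := by
  have hy := curveE_Y_S_ne_negY hΔ
  rw [slope_of_Y_ne rfl hy, div_eq_iff (sub_ne_zero.mpr hy), curveE_negY]
  simp only [curveE]
  ring

lemma curveE_two_nsmul_S (hΔ : (curveE k).Δ ≠ 0) :
    2 • Point.some _ _ (curveE_nonsingular_S hΔ) =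
      Point.some _ _ (curveE_nonsingular_T hΔ) := by
  rw [two_nsmul]
  refine Point.add_self_eq_some_of_Y_ne _ (curveE_Y_S_ne_negY hΔ) ?_ ?_
  all_goals
    simp only [curveE_slope_S hΔ, addY, negAddY, addX, curveE_negY]
    simp only [curveE]
    ring

lemma curveE_two_nsmul_T (hΔ : (curveE k).Δ ≠ 0) :
    2 • Point.some _ _ (curveE_nonsingular_T hΔ) = 0 := by
  rw [two_nsmul]
  exact Point.add_self_of_Y_eq (by rw [curveE_negY, neg_zero])

lemma curveE_four_nsmul_S (hΔ : (curveE k).Δ ≠ 0) :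
    4 • Point.some _ _ (curveE_nonsingular_S hΔ) = 0 := by
  rw [show 4 = 2 * 2 from rfl, mul_nsmul, curveE_two_nsmul_S hΔ, curveE_two_nsmul_T hΔ]

end Field

/-- On the nonsingular Weierstrass curve
`E_k : Y² = X³ + (k²-5k+8)X² + (-2k²+5k+4)(4-k)X + (k²+k)(4-k)²` over `ℚ`, the point
`S = (4-k, 16-4k)` lies on the curve and is a nonzero torsion point with `4 • S = 0`. -/
theorem S_is_four_torsion_on_Ek (k : ℚ)
    (E : WeierstrassCurve.Affine ℚ)
    (hE : E = { a₁ := 0, a₂ := k ^ 2 - 5 * k + 8,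
                a₃ := 0, a₄ := (-2 * k ^ 2 + 5 * k + 4) * (4 - k),
                a₆ := (k ^ 2 + k) * (4 - k) ^ 2 })
    (hΔ : E.Δ ≠ 0) :
    ∃ h : E.Nonsingular (4 - k) (16 - 4 * k),
      4 • (WeierstrassCurve.Affine.Point.some _ _ h) = (0 : E.Point) ∧
        WeierstrassCurve.Affine.Point.some _ _ h ≠ (0 : E.Point) := by
  obtain rfl : E = curveE k := hE
  exact ⟨curveE_nonsingular_S hΔ, curveE_four_nsmul_S hΔ, Point.some_ne_zero _⟩
end

section
/- Let k be a real (or complex) number and let x₀, y₀ be nonzero complex numbers with x₀ + y₀ ≠ 0 and (k-4) + x₀ + y₀ ≠ 0, satisfying x₀ + 1/x₀ + y₀ + 1/y₀ + (k-4) = 0. Set x₁ = ((k-4) + x₀ + y₀)/(x₀ + y₀) and y₁ = (k-4)(y₀ - x₀)((k-4) + x₀ + y₀)/(2(x₀ + y₀)^2). Then y₁^2 = x₁ (x₁^2 + ((k-4)^2/4 - 2) x₁ + 1). -/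
/-- The birational transformation `ψ₃` maps the curve
`R_k : x₀ + 1/x₀ + y₀ + 1/y₀ + (k-4) = 0` to the elliptic curve
`F_k : y₁² = x₁(x₁² + ((k-4)²/4 - 2)x₁ + 1)`. -/
theorem psi3_maps_Rk_to_Fk (k : ℂ) (x₀ y₀ : ℂ) (hx₀ : x₀ ≠ 0) (hy₀ : y₀ ≠ 0)
    (hsum : x₀ + y₀ ≠ 0) (hksum : (k - 4) + x₀ + y₀ ≠ 0)
    (hR : x₀ + 1 / x₀ + y₀ + 1 / y₀ + (k - 4) = 0) :
    (((k - 4) * (y₀ - x₀) * ((k - 4) + x₀ + y₀)) / (2 * (x₀ + y₀) ^ 2)) ^ 2 =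
      (((k - 4) + x₀ + y₀) / (x₀ + y₀)) *
        ((((k - 4) + x₀ + y₀) / (x₀ + y₀)) ^ 2 +
          ((k - 4) ^ 2 / 4 - 2) * (((k - 4) + x₀ + y₀) / (x₀ + y₀)) + 1) := by
  field_simp at hR
  have hrhs : (((k - 4) + x₀ + y₀) / (x₀ + y₀)) *
        ((((k - 4) + x₀ + y₀) / (x₀ + y₀)) ^ 2 +
          ((k - 4) ^ 2 / 4 - 2) * (((k - 4) + x₀ + y₀) / (x₀ + y₀)) + 1)
      = (((k - 4) + x₀ + y₀) * (((k - 4) + x₀ + y₀) ^ 2 +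
          ((k - 4) ^ 2 / 4 - 2) * ((k - 4) + x₀ + y₀) * (x₀ + y₀) + (x₀ + y₀) ^ 2))
        / (x₀ + y₀) ^ 3 := by
    field_simp
  rw [div_pow, hrhs, div_eq_div_iff
    (pow_ne_zero 2 (mul_ne_zero two_ne_zero (pow_ne_zero 2 hsum))) (pow_ne_zero 3 hsum)]
  linear_combination (-4*(k-4)^2*((k-4)+x₀+y₀)*(x₀+y₀)^3) * hR
end

section
/- Let k be a real (or complex) number and let x₂, y₂ be complex numbers with x₂ + y₂ ≠ k satisfying (x₂+1)(y₂+1)(x₂+y₂) = k x₂ y₂. Set X₀ = k(x₂ + y₂ + 1)/(x₂ + y₂ - k) and Y₀ = k(-k x₂ + y₂ + 1)/(x₂ + y₂ - k). Then Y₀^2 + (k-2) X₀ Y₀ + k Y₀ = X₀^3. -/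
/-- The birational transformation `φ₂` maps the curve `P_k : (x+1)(y+1)(x+y) = kxy` to the
Weierstrass curve `U_k : Y² + (k-2)XY + kY = X³` via
`X₀ = k(x₂+y₂+1)/(x₂+y₂-k)`, `Y₀ = k(-kx₂+y₂+1)/(x₂+y₂-k)`. -/
theorem phi2_maps_Pk_to_Uk (k x₂ y₂ : ℂ) (hne : x₂ + y₂ ≠ k)
    (hP : (x₂ + 1) * (y₂ + 1) * (x₂ + y₂) = k * x₂ * y₂) :
    (k * (-k * x₂ + y₂ + 1) / (x₂ + y₂ - k)) ^ 2 +
      (k - 2) * (k * (x₂ + y₂ + 1) / (x₂ + y₂ - k)) *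
        (k * (-k * x₂ + y₂ + 1) / (x₂ + y₂ - k)) +
      k * (k * (-k * x₂ + y₂ + 1) / (x₂ + y₂ - k)) =
    (k * (x₂ + y₂ + 1) / (x₂ + y₂ - k)) ^ 3 := by
  have hd : x₂ + y₂ - k ≠ 0 := sub_ne_zero.mpr hne
  field_simp
  linear_combination (-(k ^ 2) * (k + 1) ^ 2) * hP
end

section
/- Let k be a real (or complex) number and let X₁, Y₁ be complex numbers with X₁ ≠ 1 satisfying Y₁^2 = (k^2+k)X₁^6 + (-2k^2+5k+4)X₁^4 + (k^2-5k+8)X₁^2 + (-k+4). Set x = (X₁+1)/(X₁-1) and y = (2X₁Y₁ - (2k+1)X₁^4 + (2k-6)X₁^2 - 1)/(X₁-1)^4. Then Q_k(x,y) = 0, where Q_k(x,y) = y^2 + (x^4 + k x^3 + 2k x^2 + k x + 1)y + x^4. -/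
/-!
Substituting `x = a/d`, `y = b/d⁴` into `Q_k` and clearing the denominator `d⁸` gives a
polynomial in `a, b, d`, weighted homogeneous of degree 8 for the weights `1, 4, 1`. For `a = X₁ + 1`, `d = X₁ - 1` and `b` the numerator of `y`, this form equals
`4X₁²(Y₁² - h(X₁²))`, which vanishes on `Z_k'`.
-/

def Qk {K : Type*} [CommRing K] (k x y : K) : K :=
  y ^ 2 + (x ^ 4 + k * x ^ 3 + 2 * k * x ^ 2 + k * x + 1) * y + x ^ 4

theorem Qk_div {K : Type*} [Field K] (k a b d : K) (hd : d ≠ 0) :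
    Qk k (a / d) (b / d ^ 4) =
      (b ^ 2 + (a ^ 4 + k * a ^ 3 * d + 2 * k * a ^ 2 * d ^ 2 + k * a * d ^ 3 + d ^ 4) * b +
        a ^ 4 * d ^ 4) / d ^ 8 := by
  unfold Qk
  field_simp

theorem Qk_numerator_eq {R : Type*} [CommRing R] (k X Y : R) :
    let b := 2 * X * Y - (2 * k + 1) * X ^ 4 + (2 * k - 6) * X ^ 2 - 1
    let a := X + 1
    let d := X - 1
    b ^ 2 + (a ^ 4 + k * a ^ 3 * d + 2 * k * a ^ 2 * d ^ 2 + k * a * d ^ 3 + d ^ 4) * b +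
        a ^ 4 * d ^ 4 =
      4 * X ^ 2 * (Y ^ 2 - ((k ^ 2 + k) * X ^ 6 + (-2 * k ^ 2 + 5 * k + 4) * X ^ 4 +
        (k ^ 2 - 5 * k + 8) * X ^ 2 + (-k + 4))) := by
  intro b a d
  ring

/-- The birational substitution `x = (X₁+1)/(X₁-1)`,
`y = (2X₁Y₁ - (2k+1)X₁⁴ + (2k-6)X₁² - 1)/(X₁-1)⁴` maps the curve
`Z_k' : Y₁² = (k²+k)X₁⁶ + (-2k²+5k+4)X₁⁴ + (k²-5k+8)X₁² + (-k+4)` to the genus 2 curve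
`Q_k(x, y) = y² + (x⁴ + kx³ + 2kx² + kx + 1)y + x⁴ = 0`. -/
theorem Zk_prime_maps_to_Qk (k X₁ Y₁ : ℂ) (hX₁ : X₁ ≠ 1)
    (hZ : Y₁ ^ 2 = (k ^ 2 + k) * X₁ ^ 6 + (-2 * k ^ 2 + 5 * k + 4) * X₁ ^ 4 +
      (k ^ 2 - 5 * k + 8) * X₁ ^ 2 + (-k + 4)) :
    ((2 * X₁ * Y₁ - (2 * k + 1) * X₁ ^ 4 + (2 * k - 6) * X₁ ^ 2 - 1) / (X₁ - 1) ^ 4) ^ 2 +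
      (((X₁ + 1) / (X₁ - 1)) ^ 4 + k * ((X₁ + 1) / (X₁ - 1)) ^ 3 +
        2 * k * ((X₁ + 1) / (X₁ - 1)) ^ 2 + k * ((X₁ + 1) / (X₁ - 1)) + 1) *
        ((2 * X₁ * Y₁ - (2 * k + 1) * X₁ ^ 4 + (2 * k - 6) * X₁ ^ 2 - 1) / (X₁ - 1) ^ 4) +
      ((X₁ + 1) / (X₁ - 1)) ^ 4 = 0 := by
  change Qk k ((X₁ + 1) / (X₁ - 1))
    ((2 * X₁ * Y₁ - (2 * k + 1) * X₁ ^ 4 + (2 * k - 6) * X₁ ^ 2 - 1) / (X₁ - 1) ^ 4) = 0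
  rw [Qk_div _ _ _ _ (sub_ne_zero.mpr hX₁), Qk_numerator_eq, ← hZ, sub_self, mul_zero, zero_div]
end

section
/- Let k be a real (or complex) number and let X, Y be complex numbers satisfying Y^2 = X^3 + (k^2-5k+8)X^2 + (-2k^2+5k+4)(4-k)X + (k^2+k)(4-k)^2, with X ≠ -k and X ≠ 4-k, and such that (2k-8)X + (2k^2-8k) - 2Y ≠ 0 and (2k-8)X + (2k^2-8k) + 2Y ≠ 0. Set x₀ = ((2k-8)X + (2k^2-8k) - 2Y)/((X+k)(X+k-4)) and y₀ = ((2k-8)X + (2k^2-8k) + 2Y)/((X+k)(X+k-4)). Then x₀ + 1/x₀ + y₀ + 1/y₀ + (k-4) = 0. -/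
/-- The rational functions
`x₀ = ((2k-8)X + (2k²-8k) - 2Y)/((X+k)(X+k-4))` and
`y₀ = ((2k-8)X + (2k²-8k) + 2Y)/((X+k)(X+k-4))` on the Weierstrass curve
`E_k : Y² = X³ + (k²-5k+8)X² + (-2k²+5k+4)(4-k)X + (k²+k)(4-k)²` satisfy the equation
`x₀ + 1/x₀ + y₀ + 1/y₀ + (k-4) = 0` of the curve `R_k`. -/
theorem Ek_maps_to_Rk (k X Y : ℂ)
    (hE : Y ^ 2 = X ^ 3 + (k ^ 2 - 5 * k + 8) * X ^ 2 +
      (-2 * k ^ 2 + 5 * k + 4) * (4 - k) * X + (k ^ 2 + k) * (4 - k) ^ 2)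
    (hX₁ : X ≠ -k) (hX₂ : X ≠ 4 - k)
    (hnum₁ : (2 * k - 8) * X + (2 * k ^ 2 - 8 * k) - 2 * Y ≠ 0)
    (hnum₂ : (2 * k - 8) * X + (2 * k ^ 2 - 8 * k) + 2 * Y ≠ 0) :
    (((2 * k - 8) * X + (2 * k ^ 2 - 8 * k) - 2 * Y) / ((X + k) * (X + k - 4))) +
      1 / (((2 * k - 8) * X + (2 * k ^ 2 - 8 * k) - 2 * Y) / ((X + k) * (X + k - 4))) +
      (((2 * k - 8) * X + (2 * k ^ 2 - 8 * k) + 2 * Y) / ((X + k) * (X + k - 4))) +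
      1 / (((2 * k - 8) * X + (2 * k ^ 2 - 8 * k) + 2 * Y) / ((X + k) * (X + k - 4))) +
      (k - 4) = 0 := by
  have h1 : X + k ≠ 0 := fun h => hX₁ (by linear_combination h)
  have h2 : X + k - 4 ≠ 0 := fun h => hX₂ (by linear_combination h)
  have hd : (X + k) * (X + k - 4) ≠ 0 := mul_ne_zero h1 h2
  rw [one_div_div, one_div_div, div_add_div _ _ hd hnum₁,
    div_add_div _ _ (mul_ne_zero hd hnum₁) hd,
    div_add_div _ _ (mul_ne_zero (mul_ne_zero hd hnum₁) hd) hnum₂,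
    add_eq_zero_iff_eq_neg, div_eq_iff
      (mul_ne_zero (mul_ne_zero (mul_ne_zero hd hnum₁) hd) hnum₂)]
  linear_combination ((X + k) * (X + k - 4)) *
    (-(8 * ((2 * k - 8) * X + (2 * k ^ 2 - 8 * k))) -
      4 * (k - 4) * ((X + k) * (X + k - 4))) * hE
end
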